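/- If a great circle C lies in the Clifford torus T = {p ∈ S³ : p₁p₃ = p₂p₄}, then the polar great circle of C (the set of points of S³ at distance π/2 from every point of C) also lies in T. -/

import Mathlib

open Real

noncomputable abbrev E4 := EuclideanSpace ℝ (Fin 4)

def sphere3' : Set E4 := {p | ∑ i, p i ^ 2 = 1}

/-- The Clifford torus T = {p ∈ S³ : p₁p₃ = p₂p₄}. -/
def cliffordT' : Set E4 := {p ∈ sphere3' | p 0 * p 2 = p 1 * p 3}

/-!
The Clifford torus is the zero set on S³ of the quadratic form `Q p = ⟪J p, p⟫`, where `J` is the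
symmetric orthogonal involution `(p₀, p₁, p₂, p₃) ↦ (p₂, -p₃, p₀, -p₁)`. If the great circle of a
plane `V` lies in `T`, then `Q` vanishes on `V` by homogeneity, so by polarization `J V ⊥ V`.
As `J` is injective and `dim V = 2 = dim V^⊥`, this forces `J V = V^⊥`, and `Q (J v) = Q v = 0`.
-/

open Module RealInnerProductSpace

section IsotropicSubspace

variable {E : Type*} [NormedAddCommGroup E] [InnerProductSpace ℝ E] {J : E →ₗ[ℝ] E}
  {V : Submodule ℝ E}

theorem inner_map_self_eq_zero_of_forall_norm_eq_one
    (h : ∀ v ∈ V, ‖v‖ = 1 → ⟪J v, v⟫ = 0) {v : E} (hv : v ∈ V) : ⟪J v, v⟫ = 0 := by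
  rcases eq_or_ne v 0 with rfl | hv0
  · simp
  have hn : ‖v‖ ≠ 0 := norm_ne_zero_iff.mpr hv0
  have hu := h (‖v‖⁻¹ • v) (V.smul_mem _ hv) (by
    rw [norm_smul, norm_inv, norm_norm, inv_mul_cancel₀ hn])
  rw [map_smul, inner_smul_left, inner_smul_right] at hu
  simpa [hn] using hu

theorem inner_map_eq_zero_of_isotropic (hJ : J.IsSymmetric) (h : ∀ v ∈ V, ⟪J v, v⟫ = 0)
    {v w : E} (hv : v ∈ V) (hw : w ∈ V) : ⟪J v, w⟫ = 0 := by
  have hvw := h _ (V.add_mem hv hw)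
  rw [map_add, inner_add_left, inner_add_right, inner_add_right, h v hv, h w hw, hJ w v,
    real_inner_comm (J v) w] at hvw
  linarith

theorem map_eq_orthogonal_of_isotropic [FiniteDimensional ℝ E] (hJ : J.IsSymmetric)
    (hJJ : Function.Involutive J) (hV : 2 * finrank ℝ V = finrank ℝ E)
    (h : ∀ v ∈ V, ⟪J v, v⟫ = 0) : V.map J = Vᗮ := by
  have hle : V.map J ≤ Vᗮ := by
    rintro _ ⟨v, hv, rfl⟩
    exact (Submodule.mem_orthogonal' V _).2 fun w hw => inner_map_eq_zero_of_isotropic hJ h hv hw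
  refine Submodule.eq_of_le_of_finrank_eq hle ?_
  have hmap := LinearEquiv.finrank_map_eq (LinearEquiv.ofInvolutive J hJJ) V
  have hsum := V.finrank_add_finrank_orthogonal
  change finrank ℝ (V.map J) = _ at hmap
  omega

theorem inner_map_self_eq_zero_of_mem_orthogonal [FiniteDimensional ℝ E] (hJ : J.IsSymmetric)
    (hJJ : Function.Involutive J) (hV : 2 * finrank ℝ V = finrank ℝ E)
    (h : ∀ v ∈ V, ⟪J v, v⟫ = 0) {w : E} (hw : w ∈ Vᗮ) : ⟪J w, w⟫ = 0 := by
  rw [← map_eq_orthogonal_of_isotropic hJ hJJ hV h] at hw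
  obtain ⟨v, hv, rfl⟩ := hw
  rw [hJJ v, ← hJ]
  exact h v hv

end IsotropicSubspace

noncomputable def cliffordInvolution : E4 →ₗ[ℝ] E4 where
  toFun p := WithLp.toLp 2 ![p 2, -p 3, p 0, -p 1]
  map_add' p q := by
    ext i
    fin_cases i <;> simp <;> ring
  map_smul' c p := by
    ext i
    fin_cases i <;> simp

theorem cliffordInvolution_involutive : Function.Involutive cliffordInvolution := by
  intro p
  ext i
  fin_cases i <;> simp [cliffordInvolution]

theorem inner_cliffordInvolution (p q : E4) :
    ⟪cliffordInvolution p, q⟫ = p 2 * q 0 - p 3 * q 1 + p 0 * q 2 - p 1 * q 3 := by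
  simp [cliffordInvolution, PiLp.inner_apply, Fin.sum_univ_four]
  ring

theorem cliffordInvolution_isSymmetric : cliffordInvolution.IsSymmetric := by
  intro p q
  rw [inner_cliffordInvolution, real_inner_comm, inner_cliffordInvolution]
  ring

theorem mem_sphere3'_iff (p : E4) : p ∈ sphere3' ↔ ‖p‖ = 1 := by
  rw [← pow_eq_one_iff_of_nonneg (norm_nonneg p) two_ne_zero, EuclideanSpace.norm_sq_eq]
  simp [sphere3']

theorem mem_cliffordT'_iff (p : E4) :
    p ∈ cliffordT' ↔ ‖p‖ = 1 ∧ ⟪cliffordInvolution p, p⟫ = 0 := by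
  rw [cliffordT', Set.mem_ofPred_eq, mem_sphere3'_iff, inner_cliffordInvolution]
  constructor <;> rintro ⟨h1, h2⟩ <;> exact ⟨h1, by linarith⟩

/-- If a great circle S³ ∩ V lies in the Clifford torus T, then so does its polar
great circle S³ ∩ V^⊥. -/
theorem stmt_18 (V : Submodule ℝ E4) (hV : Module.finrank ℝ V = 2)
    (hC : sphere3' ∩ (V : Set E4) ⊆ cliffordT') :
    sphere3' ∩ (Vᗮ : Set E4) ⊆ cliffordT' := by
  have hunit : ∀ v ∈ V, ‖v‖ = 1 → ⟪cliffordInvolution v, v⟫ = 0 := fun v hv hv1 =>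
    ((mem_cliffordT'_iff v).1 (hC ⟨(mem_sphere3'_iff v).2 hv1, hv⟩)).2
  have hdim : 2 * finrank ℝ V = finrank ℝ E4 := by simp [hV]
  rintro p ⟨hp, hpV⟩
  exact (mem_cliffordT'_iff p).2 ⟨(mem_sphere3'_iff p).1 hp,
    inner_map_self_eq_zero_of_mem_orthogonal cliffordInvolution_isSymmetric
      cliffordInvolution_involutive hdim
      (fun _ hv => inner_map_self_eq_zero_of_forall_norm_eq_one hunit hv) hpV⟩
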